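/- Let $C$ be the Cartan matrix of type $A_n$ and let $Z \in \mathbb{C}^n$. Then $\sum_{i,j=1}^n (C^{-1})_{ij} Z_i \overline{Z_j} = \frac{1}{n+1} \sum_{1 \le k \le l \le n} \left| \sum_{m=k}^{l} Z_m \right|^2$. In particular, the left-hand side is a nonnegative real number. -/

import Mathlib

/-!
The inverse of the Cartan matrix of `Aₙ` is `(n + 1)⁻¹ N`, where `N i j` is the number of
positive roots `eₖ + ⋯ + eₗ` whose support contains both `i` and `j`, namely
`(min i j + 1) (n - max i j)`: this is the discrete Green's function of the second-difference
operator `C` with zero boundary values at `0` and `n + 1`. On the other side, expanding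
`|∑_{m=k}^l Z_m|²` and summing over all roots counts each product `Z_i Z̄_j` exactly `N i j`
times.
-/

open Matrix Finset

/-- The Cartan matrix of type `Aₙ`, over the complex numbers. -/
def cartanA (n : ℕ) : Matrix (Fin n) (Fin n) ℂ :=
  Matrix.of fun i j =>
    if i = j then 2 else if i.val + 1 = j.val ∨ j.val + 1 = i.val then -1 else 0

theorem sum_mul_sum_eq_sum_card_nsmul {ι ρ R : Type*} [Fintype ι] [Fintype ρ] [CommSemiring R]
    [DecidableEq ι] (S : ρ → Finset ι) (x y : ι → R) :
    ∑ r, (∑ m ∈ S r, x m) * (∑ m' ∈ S r, y m') =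
      ∑ m, ∑ m', #{r | m ∈ S r ∧ m' ∈ S r} • (x m * y m') := by
  calc ∑ r, (∑ m ∈ S r, x m) * (∑ m' ∈ S r, y m')
      = ∑ r, ∑ m, ∑ m', if m ∈ S r ∧ m' ∈ S r then x m * y m' else 0 := by
        simp [sum_mul_sum, ite_and, sum_ite_irrel]
    _ = ∑ m, ∑ m', ∑ r, if m ∈ S r ∧ m' ∈ S r then x m * y m' else 0 := by
        rw [sum_comm]; exact sum_congr rfl fun m _ => sum_comm
    _ = ∑ m, ∑ m', #{r | m ∈ S r ∧ m' ∈ S r} • (x m * y m') := by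
        simp_rw [← sum_filter, sum_const]

theorem sum_sum_filter_le_eq_sum_Icc {α M : Type*} [Preorder α] [LocallyFiniteOrder α]
    [Fintype α] [DecidableLE α] [AddCommMonoid M] (g : Finset α → M) (hg : g ∅ = 0) :
    ∑ k, ∑ l ∈ univ.filter (fun l => k ≤ l), g (univ.filter fun m => k ≤ m ∧ m ≤ l) =
      ∑ p : α × α, g (Icc p.1 p.2) := by
  rw [Fintype.sum_prod_type]
  refine sum_congr rfl fun k _ => ?_
  rw [sum_filter]
  refine sum_congr rfl fun l _ => ?_
  split_ifs with hkl
  · rw [filter_le_le_eq_Icc]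
  · rw [Icc_eq_empty hkl, hg]

theorem sum_cartanA_mul_apply_succ {n : ℕ} (f : ℕ → ℂ) (h0 : f 0 = 0)
    (hlast : f (n + 1) = 0) (i : Fin n) :
    ∑ a : Fin n, cartanA n i a * f (a + 1) = 2 * f (i + 1) - f i - f (i + 2) := by
  set c : ℕ → ℂ := fun b =>
    (if b = i + 1 then 2 else 0) - (if b = i then 1 else 0) - (if b = i + 2 then 1 else 0)
  have hc : ∀ a : Fin n, cartanA n i a = c (a + 1) := by
    intro a
    simp only [cartanA, of_apply, Fin.ext_iff, c]
    split_ifs <;> first | omega | norm_num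
  have hi : (i : ℕ) < n + 2 ∧ (i : ℕ) + 1 < n + 2 ∧ (i : ℕ) + 2 < n + 2 := by omega
  calc ∑ a : Fin n, cartanA n i a * f (a + 1) = ∑ a ∈ range n, c (a + 1) * f (a + 1) := by
        simp only [hc, Fin.sum_univ_eq_sum_range (fun a => c (a + 1) * f (a + 1))]
    _ = ∑ b ∈ range (n + 2), c b * f b := by
        rw [sum_range_succ, sum_range_succ', h0, hlast]; simp
    _ = 2 * f (i + 1) - f i - f (i + 2) := by
        simp [c, sub_mul, sum_sub_distrib, ite_mul, sum_ite_eq', hi]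

/-- Indices are shifted by one, so that the boundary values sit at `a = 0` and `a = n + 1`. -/
noncomputable def greenA (n a b : ℕ) : ℂ :=
  (min a b : ℕ) * ((n : ℂ) + 1 - (max a b : ℕ))

theorem greenA_zero_left (n b : ℕ) : greenA n 0 b = 0 := by
  simp [greenA]

theorem greenA_succ_self_left {n b : ℕ} (hb : b ≤ n + 1) : greenA n (n + 1) b = 0 := by
  simp [greenA, max_eq_left hb]

theorem greenA_second_difference (n i j : ℕ) :
    2 * greenA n (i + 1) j - greenA n i j - greenA n (i + 2) j =
      if i + 1 = j then (n : ℂ) + 1 else 0 := by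
  rcases lt_trichotomy (i + 1) j with h | rfl | h
  · simp only [greenA, if_neg h.ne, min_eq_left (by omega : i + 1 ≤ j),
      min_eq_left (by omega : i ≤ j), min_eq_left (by omega : i + 2 ≤ j),
      max_eq_right (by omega : i + 1 ≤ j), max_eq_right (by omega : i ≤ j),
      max_eq_right (by omega : i + 2 ≤ j)]
    push_cast; ring
  · simp only [greenA, if_true, min_self, max_self, min_eq_left (by omega : i ≤ i + 1),
      max_eq_right (by omega : i ≤ i + 1), min_eq_right (by omega : i + 1 ≤ i + 2),
      max_eq_left (by omega : i + 1 ≤ i + 2)]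
    push_cast; ring
  · simp only [greenA, if_neg h.ne', min_eq_right (by omega : j ≤ i + 1),
      min_eq_right (by omega : j ≤ i), min_eq_right (by omega : j ≤ i + 2),
      max_eq_left (by omega : j ≤ i + 1), max_eq_left (by omega : j ≤ i),
      max_eq_left (by omega : j ≤ i + 2)]
    push_cast; ring

noncomputable def rootPairCountA (n : ℕ) : Matrix (Fin n) (Fin n) ℂ :=
  of fun m m' => #{p : Fin n × Fin n | m ∈ Icc p.1 p.2 ∧ m' ∈ Icc p.1 p.2}

theorem card_filter_mem_Icc_and_mem_Icc {n : ℕ} (m m' : Fin n) :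
    #{p : Fin n × Fin n | m ∈ Icc p.1 p.2 ∧ m' ∈ Icc p.1 p.2} =
      (min m m' + 1 : ℕ) * (n - max m m' : ℕ) := by
  have : ({p : Fin n × Fin n | m ∈ Icc p.1 p.2 ∧ m' ∈ Icc p.1 p.2} : Finset _) =
      Iic (min m m') ×ˢ Ici (max m m') := by
    ext p; simp only [mem_filter, mem_univ, true_and, mem_Icc, mem_product, mem_Iic, mem_Ici,
      le_min_iff, max_le_iff]; tauto
  rw [this, card_product, Fin.card_Iic, Fin.card_Ici, Fin.coe_min, Fin.coe_max]

theorem rootPairCountA_apply {n : ℕ} (m m' : Fin n) :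
    rootPairCountA n m m' = greenA n (m + 1) (m' + 1) := by
  have hmax : max (m : ℕ) m' ≤ n := max_le m.isLt.le m'.isLt.le
  rw [rootPairCountA, of_apply, card_filter_mem_Icc_and_mem_Icc, greenA, Nat.add_min_add_right,
    Nat.add_max_add_right]
  push_cast [Nat.cast_sub hmax]
  ring

theorem cartanA_mul_rootPairCountA (n : ℕ) :
    cartanA n * rootPairCountA n = ((n : ℂ) + 1) • 1 := by
  ext i j
  simp only [mul_apply, rootPairCountA_apply]
  rw [sum_cartanA_mul_apply_succ (greenA n · (j + 1)) (greenA_zero_left n _)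
    (greenA_succ_self_left (by omega)), greenA_second_difference]
  simp [one_apply, Fin.ext_iff]

theorem inv_cartanA (n : ℕ) : (cartanA n)⁻¹ = ((n : ℂ) + 1)⁻¹ • rootPairCountA n := by
  have hn : (n : ℂ) + 1 ≠ 0 := by exact_mod_cast n.succ_ne_zero
  refine inv_eq_right_inv ?_
  rw [mul_smul_comm, cartanA_mul_rootPairCountA, smul_smul, inv_mul_cancel₀ hn, one_smul]

theorem volume_typeA_eq_sum_over_roots (n : ℕ) (Z : Fin n → ℂ) :
    ∑ i : Fin n, ∑ j : Fin n, (cartanA n)⁻¹ i j * Z i * (starRingEnd ℂ) (Z j)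
      = (((1 : ℝ) / (n + 1)) *
          ∑ k : Fin n, ∑ l ∈ Finset.univ.filter (fun l : Fin n => k ≤ l),
            ‖∑ m ∈ Finset.univ.filter (fun m : Fin n => k ≤ m ∧ m ≤ l), Z m‖ ^ 2
        : ℝ) := by
  rw [sum_sum_filter_le_eq_sum_Icc (fun s => ‖∑ m ∈ s, Z m‖ ^ 2) (by simp)]
  have hroots : ∑ p : Fin n × Fin n, (‖∑ m ∈ Icc p.1 p.2, Z m‖ : ℂ) ^ 2 =
      ∑ m, ∑ m', rootPairCountA n m m' * (Z m * (starRingEnd ℂ) (Z m')) := by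
    simp_rw [← Complex.mul_conj', map_sum, sum_mul_sum_eq_sum_card_nsmul, nsmul_eq_mul,
      rootPairCountA, of_apply]
  push_cast
  rw [hroots, inv_cartanA]
  simp only [Matrix.smul_apply, smul_eq_mul, mul_sum, one_div, mul_assoc]
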